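/- Let q ≥ 2, and f : ℕ → ℂ strongly q-multiplicative with |f| = 1 (i.e., f(aq+b) = f(a)f(b) for all a ∈ ℕ, 0 ≤ b < q). Define F_λ(t) = q^{-λ} Σ_{0≤u<q^λ} f(u) e(-tu/q^λ), φ_q(t) = |Σ_{0≤j<q} f(j) e(-jt)|, Ψ_q(t) = (1/q) Σ_{0≤r<q} φ_q(t + r/q), and let η = (1/log q)·log(max_{0≤t≤1} Ψ_q(t)). Then for all integers 0 ≤ δ ≤ λ, all a ∈ ℤ, and all real t: Σ_{0≤h<q^λ, h ≡ a mod q^δ} |F_λ(t+h)| ≤ q^{η(λ-δ)} |F_δ(t+a)|. -/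

import Mathlib

/-- `F_λ(t) = q^{-λ} Σ_{0≤u<q^λ} f(u) e(-tu/q^λ)`. -/
noncomputable def FL (q : ℕ) (f : ℕ → ℂ) (lam : ℕ) (t : ℝ) : ℂ :=
  (1 / (q : ℂ) ^ lam) * ∑ u ∈ Finset.range (q ^ lam),
    f u * Complex.exp (2 * Real.pi * Complex.I * (-(t * u) / (q : ℝ) ^ lam))

/-- `φ_q(t) = |Σ_{0≤j<q} f(j) e(-jt)|`. -/
noncomputable def phiq (q : ℕ) (f : ℕ → ℂ) (t : ℝ) : ℝ :=
  ‖∑ j ∈ Finset.range q, f j * Complex.exp (2 * Real.pi * Complex.I * (-(j * t)))‖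

/-- `Ψ_q(t) = (1/q) Σ_{0≤r<q} φ_q(t + r/q)`. -/
noncomputable def Psiq (q : ℕ) (f : ℕ → ℂ) (t : ℝ) : ℝ :=
  (1 / (q : ℝ)) * ∑ r ∈ Finset.range q, phiq q f (t + (r : ℝ) / q)

/-!
Strong `q`-multiplicativity factors the transform one digit at a time:
`F_{λ+1}(t) = q⁻¹ (∑_{b<q} f(b) e(-tb/q^{λ+1})) F_λ(t)`, so
`|F_{λ+1}(t)| = q⁻¹ φ_q(t/q^{λ+1}) |F_λ(t)|`. Writing `h = r q^λ + h'` with `r < q`, the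
residue condition modulo `q^δ` depends only on `h'`, and since `F_λ` has period `q^λ` the `q`
terms with the same `h'` add up to `Ψ_q((t+h')/q^{λ+1}) |F_λ(t+h')|`. Bounding `Ψ_q` by its
maximum `M = q^η` (it is continuous and `1`-periodic) and inducting on `λ` from `λ = δ`, where
the only term is `|F_δ(t+a)|`, gives the estimate.
-/

open Finset

def IsStronglyMultiplicative (q : ℕ) (f : ℕ → ℂ) : Prop :=
  ∀ a b : ℕ, b < q → f (a * q + b) = f a * f b

lemma Finset.sum_range_mul {M : Type*} [AddCommMonoid M] (g : ℕ → M) (m n : ℕ) :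
    ∑ u ∈ range (m * n), g u = ∑ r ∈ range m, ∑ h ∈ range n, g (r * n + h) := by
  induction m with
  | zero => simp
  | succ m ih => rw [Nat.succ_mul, sum_range_add, ih, sum_range_succ]

lemma Finset.sum_filter_range_mul {M : Type*} [AddCommMonoid M] {P : ℕ → Prop}
    [DecidablePred P] {n : ℕ} (hP : ∀ r h, P (r * n + h) ↔ P h) (g : ℕ → M) (m : ℕ) :
    ∑ u ∈ range (m * n) with P u, g u =
      ∑ h ∈ range n with P h, ∑ r ∈ range m, g (r * n + h) := by
  simp only [sum_filter, sum_range_mul, hP]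
  rw [sum_comm]
  simp only [sum_ite_irrel, sum_const_zero]

lemma card_filter_range_emod_eq_le_one (N : ℕ) (a : ℤ) :
    #((range N).filter (fun h : ℕ => (h : ℤ) % N = a % N)) ≤ 1 := by
  refine card_le_one.2 fun h₁ h₁' h₂ h₂' => ?_
  simp only [mem_filter, mem_range] at h₁' h₂'
  have h₁N : (h₁ : ℤ) % N = h₁ := Int.emod_eq_of_lt (by omega) (by omega)
  have h₂N : (h₂ : ℤ) % N = h₂ := Int.emod_eq_of_lt (by omega) (by omega)
  exact_mod_cast h₁N.symm.trans (h₁'.2.trans (h₂'.2.symm.trans h₂N))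

lemma exp_two_pi_I_mul_add_intCast (x : ℂ) (n : ℤ) :
    Complex.exp (2 * Real.pi * Complex.I * (x + n)) =
      Complex.exp (2 * Real.pi * Complex.I * x) := by
  rw [mul_add, Complex.exp_add, mul_comm _ (n : ℂ), Complex.exp_int_mul_two_pi_mul_I, mul_one]

/-- At `x = 0` this is `0 ^ n ≤ 1`, as `Real.logb b 0 = 0`. -/
lemma pow_le_rpow_logb_mul {b x : ℝ} (hb0 : 0 < b) (hb1 : b ≠ 1) (hx : 0 ≤ x) (n : ℕ) :
    x ^ n ≤ b ^ (Real.logb b x * n) := by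
  rcases hx.eq_or_lt with rfl | hx
  · simpa [Real.logb_zero] using pow_le_one₀ le_rfl zero_le_one
  · rw [Real.rpow_mul hb0.le, Real.rpow_logb hb0 hb1 hx, Real.rpow_natCast]

section
variable {q : ℕ} {f : ℕ → ℂ}

lemma FL_periodic (hq : q ≠ 0) (lam : ℕ) :
    Function.Periodic (FL q f lam) ((q : ℝ) ^ lam) := by
  intro t
  unfold FL
  congr 1
  refine sum_congr rfl fun u _ => ?_
  conv_rhs => rw [← exp_two_pi_I_mul_add_intCast _ (-u)]
  congr 2
  push_cast
  field_simp
  ring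

lemma FL_add_intCast_of_emod_eq (hq : q ≠ 0) (lam : ℕ) (t : ℝ) {h a : ℤ}
    (hh : h % (q : ℤ) ^ lam = a % (q : ℤ) ^ lam) : FL q f lam (t + h) = FL q f lam (t + a) := by
  obtain ⟨k, hk⟩ := Int.ModEq.dvd (n := (q : ℤ) ^ lam) hh.symm
  have ht : t + (h : ℝ) = t + a + k * (q : ℝ) ^ lam := by
    rw [eq_add_of_sub_eq' hk]
    push_cast
    ring
  rw [ht, (FL_periodic hq lam).int_mul k]

lemma FL_succ (hf : IsStronglyMultiplicative q f) (lam : ℕ) (t : ℝ) :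
    FL q f (lam + 1) t = (1 / (q : ℂ)) * (∑ b ∈ range q, f b *
      Complex.exp (2 * Real.pi * Complex.I * (-(t * b) / (q : ℝ) ^ (lam + 1)))) *
        FL q f lam t := by
  rcases Nat.eq_zero_or_pos q with rfl | hq
  · simp [FL]
  have hq0 : (q : ℂ) ≠ 0 := by exact_mod_cast hq.ne'
  unfold FL
  rw [Nat.pow_succ, Finset.sum_range_mul, mul_mul_mul_comm, sum_mul_sum, sum_comm, pow_succ,
    one_div_mul_one_div, mul_comm (q : ℂ)]
  congr 1
  refine sum_congr rfl fun b hb => sum_congr rfl fun u _ => ?_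
  rw [hf u b (mem_range.1 hb), mul_mul_mul_comm, ← Complex.exp_add, mul_comm (f b)]
  congr 2
  push_cast
  field_simp
  ring

lemma norm_FL_succ (hf : IsStronglyMultiplicative q f) (lam : ℕ) (t : ℝ) :
    ‖FL q f (lam + 1) t‖ = phiq q f (t / (q : ℝ) ^ (lam + 1)) / q * ‖FL q f lam t‖ := by
  rw [FL_succ hf, norm_mul, norm_mul, norm_div, norm_one, Complex.norm_natCast, phiq,
    one_div_mul_eq_div]
  congr 3
  refine sum_congr rfl fun b _ => ?_
  push_cast
  ring_nf

lemma sum_norm_FL_succ_add_mul (hq : q ≠ 0) (hf : IsStronglyMultiplicative q f) (n : ℕ)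
    (t : ℝ) :
    ∑ r ∈ range q, ‖FL q f (n + 1) (t + r * (q : ℝ) ^ n)‖ =
      Psiq q f (t / (q : ℝ) ^ (n + 1)) * ‖FL q f n t‖ := by
  rw [Psiq, mul_sum, sum_mul]
  refine sum_congr rfl fun r _ => ?_
  rw [norm_FL_succ hf, (FL_periodic hq n).nat_mul r t, one_div_mul_eq_div]
  congr 3
  field_simp
  ring

lemma phiq_periodic : Function.Periodic (phiq q f) 1 := by
  intro s
  unfold phiq
  congr 1
  refine sum_congr rfl fun j _ => ?_
  conv_rhs => rw [← exp_two_pi_I_mul_add_intCast _ (-j)]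
  push_cast
  ring_nf

lemma Psiq_periodic : Function.Periodic (Psiq q f) 1 := by
  intro s
  simp only [Psiq, add_right_comm s 1, phiq_periodic _]

lemma continuous_Psiq : Continuous (Psiq q f) := by
  unfold Psiq phiq
  fun_prop

lemma Psiq_nonneg (s : ℝ) : 0 ≤ Psiq q f s := by
  unfold Psiq phiq
  positivity

lemma Psiq_le_sSup (s : ℝ) : Psiq q f s ≤ sSup (Psiq q f '' Set.Icc 0 1) := by
  have h := Psiq_periodic (q := q) (f := f)
  rw [← zero_add 1, h.image_Icc one_pos 0]
  exact le_csSup (h.compact_of_continuous one_ne_zero continuous_Psiq).bddAbove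
    (Set.mem_range_self s)

lemma sum_norm_FL_filter_emod_self_le (hq : q ≠ 0) (lam : ℕ) (a : ℤ) (t : ℝ) :
    ∑ h ∈ (range (q ^ lam)).filter
        (fun h : ℕ => (h : ℤ) % (q : ℤ) ^ lam = a % (q : ℤ) ^ lam),
      ‖FL q f lam (t + h)‖ ≤ ‖FL q f lam (t + a)‖ := by
  have hcard := card_filter_range_emod_eq_le_one (q ^ lam) a
  push_cast at hcard
  rw [sum_eq_card_nsmul fun h hh => ?_, nsmul_eq_mul]
  · exact mul_le_of_le_one_left (norm_nonneg _) (by exact_mod_cast hcard)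
  · rw [← FL_add_intCast_of_emod_eq hq lam t (mem_filter.1 hh).2, Int.cast_natCast]

lemma sum_norm_FL_succ_filter_emod (hq : q ≠ 0) (hf : IsStronglyMultiplicative q f)
    {δ n : ℕ} (hn : δ ≤ n) (a : ℤ) (t : ℝ) :
    ∑ h ∈ (range (q ^ (n + 1))).filter
        (fun h : ℕ => (h : ℤ) % (q : ℤ) ^ δ = a % (q : ℤ) ^ δ),
        ‖FL q f (n + 1) (t + h)‖ =
      ∑ h ∈ (range (q ^ n)).filter
          (fun h : ℕ => (h : ℤ) % (q : ℤ) ^ δ = a % (q : ℤ) ^ δ),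
        Psiq q f ((t + h) / (q : ℝ) ^ (n + 1)) * ‖FL q f n (t + h)‖ := by
  have hmod (r h : ℕ) :
      ((r * q ^ n + h : ℕ) : ℤ) % (q : ℤ) ^ δ = (h : ℤ) % (q : ℤ) ^ δ := by
    rw [← Nat.sub_add_cancel hn, pow_add]
    push_cast
    rw [← mul_assoc, add_comm, Int.add_mul_emod_self_right]
  rw [pow_succ', sum_filter_range_mul (fun r h => by rw [hmod])]
  refine sum_congr rfl fun h _ => ?_
  rw [← sum_norm_FL_succ_add_mul hq hf]
  refine sum_congr rfl fun r _ => ?_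
  push_cast
  ring_nf

lemma sum_norm_FL_filter_emod_le (hq : q ≠ 0) (hf : IsStronglyMultiplicative q f) {B : ℝ}
    (hB0 : 0 ≤ B) (hB : ∀ s, Psiq q f s ≤ B) {δ lam : ℕ} (hδ : δ ≤ lam) (a : ℤ)
    (t : ℝ) :
    ∑ h ∈ (range (q ^ lam)).filter
        (fun h : ℕ => (h : ℤ) % (q : ℤ) ^ δ = a % (q : ℤ) ^ δ),
      ‖FL q f lam (t + h)‖ ≤ B ^ (lam - δ) * ‖FL q f δ (t + a)‖ := by
  induction lam, hδ using Nat.le_induction with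
  | base => simpa using sum_norm_FL_filter_emod_self_le hq δ a t
  | succ n hn ih =>
    rw [sum_norm_FL_succ_filter_emod hq hf hn, Nat.sub_add_comm hn, pow_succ' B, mul_assoc]
    calc _ ≤ ∑ h ∈ (range (q ^ n)).filter
              (fun h : ℕ => (h : ℤ) % (q : ℤ) ^ δ = a % (q : ℤ) ^ δ),
            B * ‖FL q f n (t + h)‖ := by
          gcongr
          exact hB _
      _ ≤ B * (B ^ (n - δ) * ‖FL q f δ (t + a)‖) := by
          rw [← mul_sum]
          gcongr

end

theorem FL_L1_estimate_general (q : ℕ) (hq : 2 ≤ q) (f : ℕ → ℂ)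
    (hfm : ∀ a b : ℕ, b < q → f (a * q + b) = f a * f b)
    (η : ℝ) (hη : η = (1 / Real.log q) * Real.log (sSup (Psiq q f '' Set.Icc 0 1)))
    (δ lam : ℕ) (hδ : δ ≤ lam) (a : ℤ) (t : ℝ) :
    ∑ h ∈ (Finset.range (q ^ lam)).filter (fun h : ℕ => (h : ℤ) % (q : ℤ) ^ δ = a % (q : ℤ) ^ δ),
        ‖FL q f lam (t + h)‖
      ≤ (q : ℝ) ^ (η * ((lam : ℝ) - δ)) * ‖FL q f δ (t + a)‖ := by
  set M := sSup (Psiq q f '' Set.Icc 0 1)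
  have hM0 : 0 ≤ M := (Psiq_nonneg 0).trans (Psiq_le_sSup 0)
  have hηM : η = Real.logb q M := by rw [hη, one_div_mul_eq_div, Real.log_div_log]
  calc _ ≤ M ^ (lam - δ) * ‖FL q f δ (t + a)‖ :=
        sum_norm_FL_filter_emod_le (by omega) hfm hM0 Psiq_le_sSup hδ a t
    _ ≤ _ := by
        gcongr
        rw [hηM, ← Nat.cast_sub hδ]
        exact pow_le_rpow_logb_mul (by positivity) (by norm_cast; omega) hM0 _

/-- L¹ estimate along arithmetic progressions for the Fourier transform of a
strongly q-multiplicative function: with `η = (1/log q)·log(max_{0≤t≤1} Ψ_q(t))`, for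
`0 ≤ δ ≤ λ`, `a ∈ ℤ`, `t ∈ ℝ`:
`Σ_{0≤h<q^λ, h ≡ a mod q^δ} |F_λ(t+h)| ≤ q^{η(λ-δ)} |F_δ(t+a)|`. -/
theorem FL_L1_estimate (q : ℕ) (hq : 2 ≤ q) (f : ℕ → ℂ)
    (hf1 : ∀ n, ‖f n‖ = 1)
    (hfm : ∀ a b : ℕ, b < q → f (a * q + b) = f a * f b)
    (η : ℝ) (hη : η = (1 / Real.log q) * Real.log (sSup (Psiq q f '' Set.Icc 0 1)))
    (δ lam : ℕ) (hδ : δ ≤ lam) (a : ℤ) (t : ℝ) :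
    ∑ h ∈ (Finset.range (q ^ lam)).filter (fun h : ℕ => (h : ℤ) % (q : ℤ) ^ δ = a % (q : ℤ) ^ δ),
        ‖FL q f lam (t + h)‖
      ≤ (q : ℝ) ^ (η * ((lam : ℝ) - δ)) * ‖FL q f δ (t + a)‖ :=
  FL_L1_estimate_general q hq f hfm η hη δ lam hδ a t
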